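/- arXiv:2005.06322 — 2 statements merged into one kernel-verified Lean document; each statement's English description precedes it below -/
import Mathlib

section
/- Let f₁, f₂ be modulus functions and g₁, g₂ weight functions. If there exist constants c₁, c₂ > 0 and k ∈ ℕ such that f₁(x)/f₂(x) ≥ c₁ for all x ≠ 0 and f₁(g₁(n))/f₂(g₂(n)) ≤ c₂ for all n ≥ k, then 𝒵_{g₁}(f₁) ⊆ 𝒵_{g₂}(f₂). -/
open Filter Set

/-- A modulus function: nonnegative, vanishing exactly at 0, subadditive,
non-decreasing, right continuous at 0 (all on `[0,∞)`). -/
def IsModulus (f : ℝ → ℝ) : Prop :=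
  (∀ x : ℝ, 0 ≤ x → 0 ≤ f x) ∧
  (∀ x : ℝ, 0 ≤ x → (f x = 0 ↔ x = 0)) ∧
  (∀ x y : ℝ, 0 ≤ x → 0 ≤ y → f (x + y) ≤ f x + f y) ∧
  (∀ x y : ℝ, 0 ≤ x → x ≤ y → f x ≤ f y) ∧
  ContinuousWithinAt f (Set.Ici 0) 0

/-- An unbounded modulus function. -/
def IsUnboundedModulus (f : ℝ → ℝ) : Prop :=
  IsModulus f ∧ Tendsto f atTop atTop

/-- A weight function `g : ℕ → [0,∞)` with `g n → ∞` and `n / g n ↛ 0`. -/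
def IsWeight (g : ℕ → ℝ) : Prop :=
  (∀ n, 0 ≤ g n) ∧ Tendsto g atTop atTop ∧
  ¬ Tendsto (fun n : ℕ => (n : ℝ) / g n) atTop (nhds 0)

open scoped Classical in
/-- `|A ∩ [1,n]|`. -/
noncomputable def cnt (A : Set ℕ) (n : ℕ) : ℕ :=
  ((Finset.Icc 1 n).filter (fun m => m ∈ A)).card

/-- The ideal `𝒵_g(f)` of sets whose `f`-density of weight `g` is zero
(for nonnegative sequences, `limsup = 0` is equivalent to convergence to `0`). -/
noncomputable def Zd (f : ℝ → ℝ) (g : ℕ → ℝ) : Set (Set ℕ) :=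
  {A | Tendsto (fun n => f (cnt A n) / f (g n)) atTop (nhds 0)}

/-! The inclusion follows from a pointwise domination of the `f₂`-density of weight `g₂` by
`c₂ / c₁` times the `f₁`-density of weight `g₁`: `c₁ f₂(x) ≤ f₁(x)` bounds the numerators and
`f₁(g₁ n) ≤ c₂ f₂(g₂ n)` the denominators. -/

namespace IsModulus

variable {f : ℝ → ℝ}

lemma nonneg (hf : IsModulus f) {x : ℝ} (hx : 0 ≤ x) : 0 ≤ f x := hf.1 x hx

lemma map_zero (hf : IsModulus f) : f 0 = 0 := (hf.2.1 0 le_rfl).2 rfl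

lemma pos (hf : IsModulus f) {x : ℝ} (hx : 0 < x) : 0 < f x :=
  (hf.nonneg hx.le).lt_of_ne fun h => hx.ne' ((hf.2.1 x hx.le).1 h.symm)

lemma div_le_mul_div {f₁ f₂ : ℝ → ℝ} (hf₁ : IsModulus f₁) (hf₂ : IsModulus f₂)
    {c₁ c₂ : ℝ} (hc₁ : 0 < c₁) (hc₂ : 0 < c₂)
    (h1 : ∀ x : ℝ, 0 ≤ x → x ≠ 0 → c₁ ≤ f₁ x / f₂ x)
    {a b x : ℝ} (ha : 0 < a) (hb : 0 < b) (hab : f₁ a / f₂ b ≤ c₂) (hx : 0 ≤ x) :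
    f₂ x / f₂ b ≤ c₂ / c₁ * (f₁ x / f₁ a) := by
  rcases hx.eq_or_lt with rfl | hx
  · rw [hf₂.map_zero, zero_div]
    exact mul_nonneg (div_pos hc₂ hc₁).le (div_nonneg (hf₁.nonneg le_rfl) (hf₁.nonneg ha.le))
  have hfa := hf₁.pos ha
  have hfb := hf₂.pos hb
  have hnum : c₁ * f₂ x ≤ f₁ x := (le_div_iff₀ (hf₂.pos hx)).1 (h1 x hx.le hx.ne')
  have hden : f₁ a ≤ c₂ * f₂ b := (div_le_iff₀ hfb).1 hab
  rw [div_mul_div_comm, le_div_iff₀ (mul_pos hc₁ hfa), div_mul_eq_mul_div,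
    div_le_iff₀ hfb]
  calc f₂ x * (c₁ * f₁ a) = c₁ * f₂ x * f₁ a := by ring
    _ ≤ f₁ x * (c₂ * f₂ b) :=
        mul_le_mul hnum hden hfa.le (hf₁.nonneg hx.le)
    _ = c₂ * f₁ x * f₂ b := by ring

end IsModulus

theorem stmt3 (f₁ f₂ : ℝ → ℝ) (hf₁ : IsModulus f₁) (hf₂ : IsModulus f₂)
    (g₁ g₂ : ℕ → ℝ) (hg₁ : IsWeight g₁) (hg₂ : IsWeight g₂)
    (c₁ c₂ : ℝ) (hc₁ : 0 < c₁) (hc₂ : 0 < c₂) (k : ℕ)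
    (h1 : ∀ x : ℝ, 0 ≤ x → x ≠ 0 → c₁ ≤ f₁ x / f₂ x)
    (h2 : ∀ n, k ≤ n → f₁ (g₁ n) / f₂ (g₂ n) ≤ c₂) :
    Zd f₁ g₁ ⊆ Zd f₂ g₂ := by
  intro A hA
  have hlim : Tendsto (fun n => c₂ / c₁ * (f₁ (cnt A n) / f₁ (g₁ n))) atTop (nhds 0) := by
    simpa using hA.const_mul (c₂ / c₁)
  refine squeeze_zero' (Eventually.of_forall fun n => ?_) ?_ hlim
  · exact div_nonneg (hf₂.nonneg (Nat.cast_nonneg _)) (hf₂.nonneg (hg₂.1 n))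
  filter_upwards [hg₁.2.1.eventually_gt_atTop 0, hg₂.2.1.eventually_gt_atTop 0,
    eventually_ge_atTop k] with n hg₁n hg₂n hkn
  exact hf₁.div_le_mul_div hf₂ hc₁ hc₂ h1 hg₁n hg₂n (h2 n hkn) (Nat.cast_nonneg _)
end

section
/- Let (a_n) be an arithmetic sequence (a₀ = 1, a_n strictly increasing, a_n | a_{n+1}, with ratios q_n = a_n/a_{n-1} ≥ 2) and x ∈ 𝕋 with d^f_g(supp(x)) = 0. Then x ∈ t^{f,g}_{(a_n)}(𝕋), i.e. ‖a_n x‖ → 0 f^g-statistically. -/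
/-! If the digits `c (n+1), …, c (n+m)` all vanish, then `a n • x` is the image of
`a n * ∑_{j > n+m} c j / a j`, since the earlier digits contribute an integer. The digit bound
`c j ≤ q j - 1` says `c j / a j ≤ 1 / a (j-1) - 1 / a j`, so this tail telescopes to at most
`1 / a (n+m)` and `‖a n • x‖ ≤ a n / a (n+m) ≤ 2⁻ᵐ`. Hence `{n | ε ≤ ‖a n • x‖}` lies in a finite
union of translates `supp x - j`, and sets of `f^g`-density zero are closed under translation,
finite unions and subsets, by monotonicity and subadditivity of `f` and `f (g n) → ∞`. -/

open Filter Set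

/-- The `f^g`-statistically characterized subgroup `t^{f,g}_{(a_n)}(𝕋)`. -/
noncomputable def statChar (f : ℝ → ℝ) (g : ℕ → ℝ) (a : ℕ → ℤ) :
    Set (AddCircle (1 : ℝ)) :=
  {x | ∀ ε > 0, {n : ℕ | ε ≤ ‖(a n) • x‖} ∈ Zd f g}

/-- An arithmetic sequence: `a 0 = 1`, strictly increasing, `a n ∣ a (n+1)`,
and all ratios `q_n ≥ 2`. -/
def IsArith (a : ℕ → ℕ) : Prop :=
  a 0 = 1 ∧ StrictMono a ∧ (∀ n, a n ∣ a (n + 1)) ∧ (∀ n, 2 * a n ≤ a (n + 1))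

/-- Canonical representation `x = Σ_{n≥1} c_n / a_n` with `0 ≤ c_n ≤ q_n - 1`
and `c_n < q_n - 1` infinitely often; here `q_n = a n / a (n-1)`. -/
def IsCanonRep (a : ℕ → ℕ) (c : ℕ → ℕ) (x : AddCircle (1 : ℝ)) : Prop :=
  c 0 = 0 ∧ (∀ n, 1 ≤ n → c n ≤ a n / a (n - 1) - 1) ∧
  (∀ N, ∃ n, N ≤ n ∧ c n < a n / a (n - 1) - 1) ∧
  x = ((∑' n, (c n : ℝ) / (a n : ℝ) : ℝ) : AddCircle (1 : ℝ))

lemma cnt_mono {A B : Set ℕ} (h : A ⊆ B) (n : ℕ) : cnt A n ≤ cnt B n := by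
  unfold cnt
  refine Finset.card_le_card fun m => ?_
  simp only [Finset.mem_filter]
  exact And.imp_right (@h m)

@[simp]
lemma cnt_empty (n : ℕ) : cnt ∅ n = 0 := by
  simp [cnt]

lemma cnt_union_le (A B : Set ℕ) (n : ℕ) : cnt (A ∪ B) n ≤ cnt A n + cnt B n := by
  unfold cnt
  refine (Finset.card_le_card fun m => ?_).trans (Finset.card_union_le _ _)
  simp only [Finset.mem_filter, Finset.mem_union, Set.mem_union]
  tauto

open scoped Classical in
lemma cnt_add_le (A : Set ℕ) (n j : ℕ) : cnt A (n + j) ≤ cnt A n + j :=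
  calc cnt A (n + j) ≤ ({m ∈ Finset.Icc 1 n | m ∈ A} ∪ Finset.Icc (n + 1) (n + j)).card := by
        refine Finset.card_le_card fun m => ?_
        simp only [Finset.mem_filter, Finset.mem_union, Finset.mem_Icc]
        rintro ⟨⟨h1, h2⟩, hA⟩
        by_cases hmn : m ≤ n
        · exact Or.inl ⟨⟨h1, hmn⟩, hA⟩
        · exact Or.inr ⟨by omega, h2⟩
    _ ≤ cnt A n + j := (Finset.card_union_le _ _).trans (by simp [cnt])

lemma cnt_preimage_add_le (A : Set ℕ) (j n : ℕ) : cnt ((· + j) ⁻¹' A) n ≤ cnt A n + j := by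
  refine le_trans ?_ (cnt_add_le A n j)
  unfold cnt
  refine Finset.card_le_card_of_injOn (· + j) (fun m hm => ?_)
    (fun _ _ _ _ => Nat.add_right_cancel)
  simp only [Finset.coe_filter, Finset.mem_Icc, Set.mem_preimage] at hm ⊢
  obtain ⟨⟨h1, h2⟩, hA⟩ := hm
  exact ⟨⟨by omega, by omega⟩, hA⟩

section Zd

variable {f : ℝ → ℝ} {g : ℕ → ℝ}

lemma IsModulus.apply_le_add_of_le {x y z : ℝ} (hf : IsModulus f) (hx : 0 ≤ x) (hy : 0 ≤ y)
    (hz : 0 ≤ z) (h : x ≤ y + z) : f x ≤ f y + f z :=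
  (hf.2.2.2.1 x (y + z) hx h).trans (hf.2.2.1 y z hy hz)

lemma mem_Zd_of_cnt_le (hf : IsModulus f) (hfg : Tendsto (fun n => f (g n)) atTop atTop)
    {A B C : Set ℕ} (k : ℕ) (h : ∀ n, cnt A n ≤ cnt B n + cnt C n + k)
    (hB : B ∈ Zd f g) (hC : C ∈ Zd f g) : A ∈ Zd f g := by
  have hk : Tendsto (fun n => f k / f (g n)) atTop (nhds 0) := tendsto_const_nhds.div_atTop hfg
  have hsum := (hB.add hC).add hk
  rw [add_zero, add_zero] at hsum
  refine squeeze_zero' ?_ ?_ hsum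
  · filter_upwards [hfg.eventually_gt_atTop 0] with n hn
    exact div_nonneg (hf.1 _ (Nat.cast_nonneg _)) hn.le
  · filter_upwards [hfg.eventually_gt_atTop 0] with n hn
    rw [← add_div, ← add_div]
    gcongr
    have hBC : f (cnt B n + cnt C n) ≤ f (cnt B n) + f (cnt C n) :=
      hf.apply_le_add_of_le (by positivity) (by positivity) (by positivity) le_rfl
    have hA : f (cnt A n) ≤ f ((cnt B n + cnt C n : ℕ) : ℝ) + f k :=
      hf.apply_le_add_of_le (by positivity) (by positivity) (by positivity)
        (by exact_mod_cast h n)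
    push_cast at hA
    linarith

lemma empty_mem_Zd (hf : IsModulus f) : ∅ ∈ Zd f g := by
  simp [Zd, ((hf.2.1 0 le_rfl).2 rfl)]

lemma mem_Zd_of_subset (hf : IsModulus f) (hfg : Tendsto (fun n => f (g n)) atTop atTop)
    {A B : Set ℕ} (hAB : A ⊆ B) (hB : B ∈ Zd f g) : A ∈ Zd f g :=
  mem_Zd_of_cnt_le hf hfg 0 (fun n => by simpa using cnt_mono hAB n) hB (empty_mem_Zd hf)

lemma union_mem_Zd (hf : IsModulus f) (hfg : Tendsto (fun n => f (g n)) atTop atTop)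
    {A B : Set ℕ} (hA : A ∈ Zd f g) (hB : B ∈ Zd f g) : A ∪ B ∈ Zd f g :=
  mem_Zd_of_cnt_le hf hfg 0 (cnt_union_le A B) hA hB

lemma biUnion_mem_Zd {ι : Type*} (hf : IsModulus f)
    (hfg : Tendsto (fun n => f (g n)) atTop atTop) (s : Finset ι) {A : ι → Set ℕ}
    (h : ∀ i ∈ s, A i ∈ Zd f g) : ⋃ i ∈ s, A i ∈ Zd f g := by
  classical
  induction s using Finset.induction_on with
  | empty => simpa using empty_mem_Zd hf
  | insert i s _ ih =>
    rw [Finset.set_biUnion_insert]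
    exact union_mem_Zd hf hfg (h i (Finset.mem_insert_self i s))
      (ih fun j hj => h j (Finset.mem_insert_of_mem hj))

lemma preimage_add_mem_Zd (hf : IsModulus f) (hfg : Tendsto (fun n => f (g n)) atTop atTop)
    {A : Set ℕ} (j : ℕ) (hA : A ∈ Zd f g) : (· + j) ⁻¹' A ∈ Zd f g :=
  mem_Zd_of_cnt_le hf hfg j (fun n => by simpa using cnt_preimage_add_le A j n) hA
    (empty_mem_Zd hf)

end Zd

lemma norm_coe_natCast_add_le (N : ℕ) (t : ℝ) : ‖((N + t : ℝ) : AddCircle (1 : ℝ))‖ ≤ |t| := by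
  rw [AddCircle.coe_add, ← nsmul_one, AddCircle.coe_nsmul, AddCircle.coe_period, nsmul_zero,
    zero_add]
  exact QuotientAddGroup.norm_mk_le_norm

section Digits

variable {a c : ℕ → ℕ}

lemma IsArith.pos (ha : IsArith a) (n : ℕ) : 0 < a n :=
  (ha.1 ▸ Nat.one_pos : 0 < a 0).trans_le (ha.2.1.monotone (Nat.zero_le n))

lemma IsArith.dvd_of_le (ha : IsArith a) {k n : ℕ} (h : k ≤ n) : a k ∣ a n :=
  Nat.rel_of_forall_rel_succ_of_le (· ∣ ·) ha.2.2.1 h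

lemma IsArith.two_pow_mul_le (ha : IsArith a) (n q : ℕ) : 2 ^ q * a n ≤ a (n + q) := by
  induction q with
  | zero => simp
  | succ q ih => rw [pow_succ', mul_assoc]; exact (Nat.mul_le_mul_left 2 ih).trans (ha.2.2.2 _)

noncomputable def digitTerm (a c : ℕ → ℕ) (j : ℕ) : ℝ := c j / a j

lemma digitTerm_nonneg (j : ℕ) : 0 ≤ digitTerm a c j := by
  unfold digitTerm; positivity

lemma digitTerm_succ_le (ha : IsArith a) (hc : ∀ n, 1 ≤ n → c n ≤ a n / a (n - 1) - 1)
    (i : ℕ) : digitTerm a c (i + 1) ≤ 1 / a i - 1 / a (i + 1) := by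
  have hq : 2 ≤ a (i + 1) / a i := (Nat.le_div_iff_mul_le (ha.pos i)).2 (ha.2.2.2 i)
  have hci : (c (i + 1) + 1) * a i ≤ a (i + 1) := by
    calc (c (i + 1) + 1) * a i ≤ a (i + 1) / a i * a i := by
          have hci := hc (i + 1) (Nat.le_add_left 1 i)
          rw [Nat.add_sub_cancel] at hci
          gcongr
          omega
      _ = a (i + 1) := Nat.div_mul_cancel (ha.2.2.1 i)
  have hpos : (0 : ℝ) < a i := by exact_mod_cast ha.pos i
  have hpos' : (0 : ℝ) < a (i + 1) := by exact_mod_cast ha.pos (i + 1)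
  rw [digitTerm, le_sub_iff_add_le, ← add_div, div_le_div_iff₀ hpos' hpos, one_mul]
  exact_mod_cast hci

lemma sum_range_digitTerm_le (ha : IsArith a) (hc : ∀ n, 1 ≤ n → c n ≤ a n / a (n - 1) - 1)
    (N M : ℕ) : ∑ k ∈ Finset.range M, digitTerm a c (k + (N + 1)) ≤ 1 / a N := by
  calc ∑ k ∈ Finset.range M, digitTerm a c (k + (N + 1))
      ≤ ∑ k ∈ Finset.range M, (1 / a (N + k) - 1 / a (N + (k + 1)) : ℝ) := by
        gcongr with k
        rw [show k + (N + 1) = N + k + 1 by omega]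
        exact digitTerm_succ_le ha hc (N + k)
    _ = 1 / a N - 1 / a (N + M) := Finset.sum_range_sub' (fun k => (1 / a (N + k) : ℝ)) M
    _ ≤ 1 / a N := sub_le_self _ (by positivity)

lemma summable_digitTerm_tail (ha : IsArith a) (hc : ∀ n, 1 ≤ n → c n ≤ a n / a (n - 1) - 1)
    (N : ℕ) : Summable fun k => digitTerm a c (k + (N + 1)) :=
  summable_of_sum_range_le (fun _ => digitTerm_nonneg _) (sum_range_digitTerm_le ha hc N)

lemma summable_digitTerm (ha : IsArith a) (hc : ∀ n, 1 ≤ n → c n ≤ a n / a (n - 1) - 1) :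
    Summable (digitTerm a c) :=
  (summable_nat_add_iff 1).1 (summable_digitTerm_tail ha hc 0)

lemma tsum_digitTerm_tail_le (ha : IsArith a) (hc : ∀ n, 1 ≤ n → c n ≤ a n / a (n - 1) - 1)
    (N : ℕ) : ∑' k, digitTerm a c (k + (N + 1)) ≤ 1 / a N :=
  Real.tsum_le_of_sum_range_le (fun _ => digitTerm_nonneg _) (sum_range_digitTerm_le ha hc N)

lemma exists_natCast_eq_mul_sum_digitTerm (ha : IsArith a) (n : ℕ) :
    ∃ N : ℕ, (N : ℝ) = a n * ∑ i ∈ Finset.range (n + 1), digitTerm a c i := by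
  refine ⟨∑ i ∈ Finset.range (n + 1), c i * (a n / a i), ?_⟩
  rw [Nat.cast_sum, Finset.mul_sum]
  refine Finset.sum_congr rfl fun i hi => ?_
  have hi : a i ∣ a n := ha.dvd_of_le (Nat.lt_succ_iff.1 (Finset.mem_range.1 hi))
  rw [Nat.cast_mul, Nat.cast_div hi (by exact_mod_cast (ha.pos i).ne'), digitTerm]
  ring

lemma norm_zsmul_tsum_digitTerm_le (ha : IsArith a)
    (hc : ∀ n, 1 ≤ n → c n ≤ a n / a (n - 1) - 1) (n : ℕ) :
    ‖(a n : ℤ) • ((∑' j, digitTerm a c j : ℝ) : AddCircle (1 : ℝ))‖ ≤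
      a n * ∑' k, digitTerm a c (k + (n + 1)) := by
  obtain ⟨N, hN⟩ := exists_natCast_eq_mul_sum_digitTerm (c := c) ha n
  rw [← AddCircle.coe_zsmul, zsmul_eq_mul, Int.cast_natCast,
    ← (summable_digitTerm ha hc).sum_add_tsum_nat_add (n + 1), mul_add, ← hN]
  refine (norm_coe_natCast_add_le N _).trans_eq (abs_of_nonneg ?_)
  exact mul_nonneg (Nat.cast_nonneg _) (tsum_nonneg fun _ => digitTerm_nonneg _)

lemma tsum_digitTerm_tail_eq (ha : IsArith a) (hc : ∀ n, 1 ≤ n → c n ≤ a n / a (n - 1) - 1)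
    {n m : ℕ} (hz : ∀ j ∈ Finset.Icc 1 m, c (n + j) = 0) :
    ∑' k, digitTerm a c (k + (n + 1)) = ∑' k, digitTerm a c (k + (n + m + 1)) := by
  rw [← (summable_digitTerm_tail ha hc n).sum_add_tsum_nat_add m, Finset.sum_eq_zero, zero_add]
  · simp only [add_assoc, add_comm m]
  · intro k hk
    rw [digitTerm, show k + (n + 1) = n + (k + 1) by omega,
      hz (k + 1) (Finset.mem_Icc.2 ⟨Nat.le_add_left 1 k, Finset.mem_range.1 hk⟩), Nat.cast_zero,
      zero_div]

lemma norm_zsmul_le_of_digits_eq_zero (ha : IsArith a)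
    (hc : ∀ n, 1 ≤ n → c n ≤ a n / a (n - 1) - 1) {n m : ℕ}
    (hz : ∀ j ∈ Finset.Icc 1 m, c (n + j) = 0) :
    ‖(a n : ℤ) • ((∑' j, digitTerm a c j : ℝ) : AddCircle (1 : ℝ))‖ ≤ (1 / 2) ^ m := by
  have hpos : (0 : ℝ) < a (n + m) := by exact_mod_cast ha.pos _
  calc _ ≤ a n * ∑' k, digitTerm a c (k + (n + 1)) := norm_zsmul_tsum_digitTerm_le ha hc n
    _ = a n * ∑' k, digitTerm a c (k + (n + m + 1)) := by rw [tsum_digitTerm_tail_eq ha hc hz]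
    _ ≤ a n * (1 / a (n + m)) := by gcongr; exact tsum_digitTerm_tail_le ha hc (n + m)
    _ ≤ (1 / 2) ^ m := by
      rw [mul_one_div, div_le_iff₀ hpos, div_pow, one_pow, div_mul_eq_mul_div,
        le_div_iff₀ (by positivity), one_mul, mul_comm]
      exact_mod_cast ha.two_pow_mul_le n m

end Digits

theorem stmt11 (f : ℝ → ℝ) (hf : IsUnboundedModulus f) (g : ℕ → ℝ) (hg : IsWeight g)
    (a : ℕ → ℕ) (ha : IsArith a) (x : AddCircle (1 : ℝ)) (c : ℕ → ℕ)
    (hx : IsCanonRep a c x) (hsupp : {n | c n ≠ 0} ∈ Zd f g) :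
    x ∈ statChar f g (fun n => (a n : ℤ)) := by
  obtain ⟨-, hc, -, rfl⟩ := hx
  have hfg : Tendsto (fun n => f (g n)) atTop atTop := hf.2.comp hg.2.1
  intro ε hε
  obtain ⟨m, hm⟩ := exists_pow_lt_of_lt_one hε (by norm_num : (1 / 2 : ℝ) < 1)
  refine mem_Zd_of_subset hf.1 hfg (fun n hn => ?_)
    (biUnion_mem_Zd hf.1 hfg (Finset.Icc 1 m) fun j _ => preimage_add_mem_Zd hf.1 hfg j hsupp)
  by_contra hnot
  simp only [Set.mem_iUnion, Set.mem_preimage, Set.mem_ofPred_eq] at hnot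
  push Not at hnot
  exact absurd (hn.trans (norm_zsmul_le_of_digits_eq_zero ha hc hnot)) (not_le.2 hm)
end
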